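/- Let W ⊆ ℤ^m be a finite set such that cone(W) is m-dimensional, let s ≥ 1, and let W^1, …, W^s ⊆ W each consist of m linearly independent vectors with cone(W) = ⋃_{i=1}^s cone(W^i). Let Λ ⊆ ℤ^m be a full-rank sublattice of ℤ^m with W^i ⊆ Λ for every i. For each i choose nonnegative integers k_w (w ∈ W^i) and set z^i := Σ_{w∈W^i} k_w w. Then lim_{t→∞} |{−t,…,t}^m ∩ ⋃_{i=1}^s (Λ ∩ (cone(W^i) + z^i))| / |{−t,…,t}^m ∩ ⋃_{i=1}^s (Λ ∩ cone(W^i))| = 1. -/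

import Mathlib

/-- Componentwise cast of an integer vector to a real vector. -/
def castVec {m : ℕ} (b : Fin m → ℤ) : Fin m → ℝ := fun i => (b i : ℝ)

/-- The cone generated by a finite family of integer vectors, as a subset of `ℝ^m`. -/
def coneFam {m k : ℕ} (v : Fin k → (Fin m → ℤ)) : Set (Fin m → ℝ) :=
  {y | ∃ c : Fin k → ℝ, (∀ i, 0 ≤ c i) ∧ y = ∑ i, c i • castVec (v i)}

/-- The cone generated by a finite set of integer vectors, as a subset of `ℝ^m`. -/
def coneOfSet {m : ℕ} (V : Finset (Fin m → ℤ)) : Set (Fin m → ℝ) :=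
  {y | ∃ c : (Fin m → ℤ) → ℝ, (∀ v, 0 ≤ c v) ∧ y = ∑ v ∈ V, c v • castVec v}

/-!
Already the points `∑ n j • w i j` with `0 ≤ n j ≤ t / C` show that the denominator has at least
of order `t ^ m` elements.
In the coordinates of the basis `w i`, the cone of `w i` is the orthant and its translate by
`∑ k i j • w i j` is the orthant shifted by `k i`, so a lattice point in the first but not in the
second lies in a slab `0 ≤ coord j < k i j`. A slab between two parallel hyperplanes meets every
line in a coordinate direction transversal to it in boundedly many lattice points, hence contains
`O(t ^ (m - 1))` points of the box `[-t, t] ^ m`; so the numerator misses only a vanishing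
proportion of the denominator.
-/

open Finset Filter Topology

section Cones

variable {m k : ℕ} {v : Fin k → Fin m → ℤ}

lemma castVec_sum_zsmul (n : Fin k → ℤ) :
    castVec (∑ j, n j • v j) = ∑ j, (n j : ℝ) • castVec (v j) := by
  funext l
  simp [castVec]

lemma castVec_sum_zsmul_mem_coneFam {n : Fin k → ℤ} (hn : ∀ j, 0 ≤ n j) :
    castVec (∑ j, n j • v j) ∈ coneFam v :=
  ⟨fun j => n j, fun j => Int.cast_nonneg_iff.mpr (hn j), castVec_sum_zsmul n⟩

lemma add_mem_coneFam {x y : Fin m → ℝ} (hx : x ∈ coneFam v) (hy : y ∈ coneFam v) :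
    x + y ∈ coneFam v := by
  obtain ⟨c, hc, rfl⟩ := hx
  obtain ⟨d, hd, rfl⟩ := hy
  exact ⟨c + d, fun j => add_nonneg (hc j) (hd j), by simp [add_smul, sum_add_distrib]⟩

lemma image_add_coneFam_subset {z : Fin m → ℝ} (hz : z ∈ coneFam v) :
    (· + z) '' coneFam v ⊆ coneFam v := by
  rintro _ ⟨y, hy, rfl⟩
  exact add_mem_coneFam hy hz

variable {B : Module.Basis (Fin k) ℝ (Fin m → ℝ)}

lemma mem_coneFam_iff_coord_nonneg (hB : ∀ j, B j = castVec (v j)) (y : Fin m → ℝ) :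
    y ∈ coneFam v ↔ ∀ j, 0 ≤ B.coord j y := by
  simp only [coneFam, ← hB, ← B.equivFun_symm_apply, B.equivFun.eq_symm_apply]
  simp [Module.Basis.coord_apply]

lemma coord_castVec_sum_zsmul (hB : ∀ j, B j = castVec (v j)) (n : Fin k → ℤ) (j : Fin k) :
    B.coord j (castVec (∑ i, n i • v i)) = n j := by
  rw [castVec_sum_zsmul, Module.Basis.coord_apply]
  simp only [← hB, B.repr_sum_self]

lemma mem_image_add_coneFam_iff (hB : ∀ j, B j = castVec (v j)) (n : Fin k → ℤ)
    (y : Fin m → ℝ) :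
    y ∈ (· + castVec (∑ j, n j • v j)) '' coneFam v ↔ ∀ j, (n j : ℝ) ≤ B.coord j y := by
  simp only [Set.image_add_right, Set.mem_preimage, ← sub_eq_add_neg,
    mem_coneFam_iff_coord_nonneg hB, map_sub, coord_castVec_sum_zsmul hB, sub_nonneg]

end Cones

section Counting

variable {m : ℕ}

noncomputable def intBox (m t : ℕ) : Finset (Fin m → ℤ) := Icc (fun _ => -(t : ℤ)) (fun _ => t)

lemma mem_intBox {t : ℕ} {b : Fin m → ℤ} : b ∈ intBox m t ↔ ∀ i, |b i| ≤ t := by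
  simp only [intBox, mem_Icc, Pi.le_def, abs_le, forall_and]

lemma card_intBox (t : ℕ) : #(intBox m t) = (2 * t + 1) ^ m := by
  simp only [intBox, Pi.card_Icc, Int.card_Icc, prod_const, card_univ, Fintype.card_fin]
  congr 1
  omega

lemma setOf_abs_le_and_eq (t : ℕ) (P : (Fin m → ℤ) → Prop) [DecidablePred P] :
    {b : Fin m → ℤ | (∀ i, |b i| ≤ t) ∧ P b} = ↑{b ∈ intBox m t | P b} := by
  ext b
  simp [mem_intBox]

lemma finite_setOf_abs_le_and (t : ℕ) (P : (Fin m → ℤ) → Prop) :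
    {b : Fin m → ℤ | (∀ i, |b i| ≤ t) ∧ P b}.Finite :=
  (intBox m t).finite_toSet.subset fun _ hb => mem_intBox.mpr hb.1

lemma mul_card_le_of_forall_apply_eq_zero {t : ℕ} (l : Fin m) {P : Finset (Fin m → ℤ)}
    (hP : P ⊆ intBox m t) (hl : ∀ p ∈ P, p l = 0) : (2 * t + 1) * #P ≤ (2 * t + 1) ^ m := by
  have hline : #(Icc (-(t : ℤ)) t) = 2 * t + 1 := by simp only [Int.card_Icc]; omega
  rw [← card_intBox, ← hline, mul_comm, ← card_product]
  refine card_le_card_of_injOn (fun q => Function.update q.1 l q.2) ?_ ?_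
  · rintro ⟨p, x⟩ hq
    obtain ⟨hp, hx⟩ := mem_product.mp hq
    refine mem_intBox.mpr fun i => ?_
    rcases eq_or_ne i l with rfl | hi
    · simpa [abs_le] using hx
    · simpa [Function.update_of_ne hi] using mem_intBox.mp (hP hp) i
  · rintro ⟨p, x⟩ hq ⟨p', x'⟩ hq' h
    have hx : x = x' := by simpa using congr_fun h l
    subst hx
    have hp : p = p' := by
      ext i
      rcases eq_or_ne i l with rfl | hi
      · rw [hl p (mem_product.mp hq).1, hl p' (mem_product.mp hq').1]
      · simpa [Function.update_of_ne hi] using congr_fun h i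
    rw [hp]

lemma mul_card_le_of_card_fiber_le {t K : ℕ} (l : Fin m) {S : Finset (Fin m → ℤ)}
    (hS : S ⊆ intBox m t) (hK : ∀ p, #{b ∈ S | Function.update b l 0 = p} ≤ K) :
    (2 * t + 1) * #S ≤ K * (2 * t + 1) ^ m := by
  have hfib := card_le_mul_card_image (f := fun b => Function.update b l 0) S K fun p _ => hK p
  have hproj : (2 * t + 1) * #(S.image fun b => Function.update b l 0) ≤ (2 * t + 1) ^ m := by
    refine mul_card_le_of_forall_apply_eq_zero l (fun p hp => ?_) (by simp)
    obtain ⟨b, hb, rfl⟩ := mem_image.mp hp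
    refine mem_intBox.mpr fun i => ?_
    rcases eq_or_ne i l with rfl | hi
    · simp
    · simpa [Function.update_of_ne hi] using mem_intBox.mp (hS hb) i
  calc (2 * t + 1) * #S ≤ (2 * t + 1) * (K * #(S.image fun b => Function.update b l 0)) :=
        Nat.mul_le_mul_left _ hfib
    _ = K * ((2 * t + 1) * #(S.image fun b => Function.update b l 0)) := by ring
    _ ≤ K * (2 * t + 1) ^ m := Nat.mul_le_mul_left _ hproj

lemma Int.card_le_of_forall_abs_sub_le {X : Finset ℤ} {c L : ℝ} (hL : 0 ≤ L)
    (hX : ∀ x ∈ X, |(x : ℝ) - c| ≤ L) : (#X : ℝ) ≤ 2 * L + 1 := by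
  have hsub : X ⊆ Icc ⌈c - L⌉ ⌊c + L⌋ := fun x hx => by
    have := abs_le.mp (hX x hx)
    exact mem_Icc.mpr ⟨Int.ceil_le.mpr (by linarith), Int.le_floor.mpr (by linarith)⟩
  have hcard : (#X : ℤ) ≤ max (⌊c + L⌋ + 1 - ⌈c - L⌉) 0 := by
    rw [← Int.toNat_eq_max, ← Int.card_Icc]
    exact_mod_cast card_le_card hsub
  have hcard' : (#X : ℝ) ≤ max ((⌊c + L⌋ : ℝ) + 1 - ⌈c - L⌉) 0 := by exact_mod_cast hcard
  refine hcard'.trans (max_le ?_ (by linarith))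
  linarith [Int.floor_le (c + L), Int.le_ceil (c - L)]

lemma castVec_eq_update_add_single (b : Fin m → ℤ) (l : Fin m) :
    castVec b = castVec (Function.update b l 0) + (b l : ℝ) • Pi.single l 1 := by
  funext i
  rcases eq_or_ne i l with rfl | hi
  · simp [castVec]
  · simp [castVec, hi]

lemma exists_mul_ncard_slab_le {φ : (Fin m → ℝ) →ₗ[ℝ] ℝ} (hφ : φ ≠ 0) (κ : ℝ) :
    ∃ K : ℕ, ∀ t : ℕ, (2 * t + 1) *
      {b : Fin m → ℤ | (∀ i, |b i| ≤ t) ∧ 0 ≤ φ (castVec b) ∧ φ (castVec b) < κ}.ncard ≤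
        K * (2 * t + 1) ^ m := by
  classical
  obtain ⟨l, ha⟩ : ∃ l, φ (Pi.single l 1) ≠ 0 := by
    by_contra! h
    exact hφ (LinearMap.pi_ext' fun i => LinearMap.ext_ring (by simpa using h i))
  set a := φ (Pi.single l 1)
  refine ⟨⌈2 * (|κ| / |a|) + 1⌉₊, fun t => ?_⟩
  rw [setOf_abs_le_and_eq, Set.ncard_coe_finset]
  refine mul_card_le_of_card_fiber_le l (filter_subset _ _) fun p => ?_
  set F := {b ∈ {b ∈ intBox m t | 0 ≤ φ (castVec b) ∧ φ (castVec b) < κ} |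
    Function.update b l 0 = p}
  have hφb : ∀ b ∈ F, φ (castVec b) = b l * a + φ (castVec p) := by
    intro b hb
    rw [castVec_eq_update_add_single b l, (mem_filter.mp hb).2]
    simp [a, add_comm]
  have hinj : Set.InjOn (fun b : Fin m → ℤ => b l) F := by
    intro b hb b' hb' h
    rw [← Function.update_eq_self l b, ← Function.update_eq_self l b', ← Function.update_idem,
      ← Function.update_idem (f := b'), (mem_filter.mp hb).2, (mem_filter.mp hb').2]
    exact congrArg _ h
  have hclose : ∀ x ∈ F.image (fun b => b l), |((x : ℤ) : ℝ) - -φ (castVec p) / a| ≤ |κ| / |a| := by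
    simp only [mem_image]
    rintro _ ⟨b, hb, rfl⟩
    have hslab := (mem_filter.mp (mem_filter.mp hb).1).2
    rw [hφb b hb] at hslab
    rw [le_div_iff₀ (abs_pos.mpr ha), ← abs_mul, sub_mul, div_mul_cancel₀ _ ha, abs_le]
    constructor <;> linarith [le_abs_self κ, neg_abs_le κ]
  rw [← card_image_of_injOn hinj]
  exact_mod_cast (Int.card_le_of_forall_abs_sub_le (by positivity) hclose).trans (Nat.le_ceil _)

end Counting

section LowerBound

variable {m k : ℕ}

lemma abs_sum_zsmul_apply_le {v : Fin k → Fin m → ℤ} {n : Fin k → ℤ} {M : ℤ}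
    (hn : ∀ j, 0 ≤ n j ∧ n j ≤ M) (l : Fin m) :
    |(∑ j, n j • v j) l| ≤ M * ∑ j, ∑ i, |v j i| := by
  rw [Finset.mul_sum]
  simp only [Finset.sum_apply, Pi.smul_apply, smul_eq_mul]
  refine (abs_sum_le_sum_abs _ _).trans (sum_le_sum fun j _ => ?_)
  rw [abs_mul, abs_of_nonneg (hn j).1]
  exact mul_le_mul (hn j).2 (single_le_sum (f := fun i => |v j i|) (fun _ _ => abs_nonneg _)
    (mem_univ l)) (abs_nonneg _) ((hn j).1.trans (hn j).2)

lemma exists_pow_le_mul_ncard_cone_points (v : Fin k → Fin m → ℤ)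
    (hv : LinearIndependent ℝ fun j => castVec (v j)) (Λ : AddSubgroup (Fin m → ℤ))
    (hvΛ : ∀ j, v j ∈ Λ) :
    ∃ c : ℕ, ∀ t : ℕ, (2 * t + 1) ^ k ≤
      c * {b : Fin m → ℤ | (∀ i, |b i| ≤ t) ∧ b ∈ Λ ∧ castVec b ∈ coneFam v}.ncard := by
  set C : ℕ := 1 + ∑ j, ∑ i, (v j i).natAbs
  refine ⟨(2 * C) ^ k, fun t => ?_⟩
  set M := t / C
  have hinj : Function.Injective fun n : Fin k → ℤ => ∑ j, n j • v j := by
    intro n n' h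
    have := Fintype.linearIndependent_iffₛ.mp hv (fun j => n j) (fun j => n' j)
    funext j
    exact_mod_cast this (by simpa only [castVec_sum_zsmul] using congrArg castVec h) j
  have hmaps : Set.MapsTo (fun n : Fin k → ℤ => ∑ j, n j • v j) (Set.Icc 0 (fun _ => (M : ℤ)))
      {b : Fin m → ℤ | (∀ i, |b i| ≤ t) ∧ b ∈ Λ ∧ castVec b ∈ coneFam v} := by
    intro n hn
    have hn' : ∀ j, 0 ≤ n j ∧ n j ≤ M := fun j => ⟨hn.1 j, hn.2 j⟩
    refine ⟨fun i => (abs_sum_zsmul_apply_le hn' i).trans ?_,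
      sum_mem fun j _ => AddSubgroup.zsmul_mem _ (hvΛ j) _,
      castVec_sum_zsmul_mem_coneFam fun j => (hn' j).1⟩
    have hCM : M * C ≤ t := Nat.div_mul_le_self t C
    have hsum : ∑ j, ∑ i, |v j i| ≤ (C : ℤ) := by simp [C]
    calc (M : ℤ) * ∑ j, ∑ i, |v j i| ≤ M * C := by gcongr
      _ ≤ t := by exact_mod_cast hCM
  have hcard : (M + 1) ^ k ≤
      {b : Fin m → ℤ | (∀ i, |b i| ≤ t) ∧ b ∈ Λ ∧ castVec b ∈ coneFam v}.ncard := by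
    have := Set.ncard_le_ncard_of_injOn _ hmaps hinj.injOn (finite_setOf_abs_le_and t _)
    rw [← coe_Icc, Set.ncard_coe_finset, Pi.card_Icc] at this
    simpa using this
  have hbox : 2 * t + 1 ≤ 2 * C * (M + 1) := by
    have : t < C * (M + 1) := Nat.lt_mul_div_succ t (by positivity)
    linarith
  calc (2 * t + 1) ^ k ≤ (2 * C * (M + 1)) ^ k := Nat.pow_le_pow_left hbox k
    _ = (2 * C) ^ k * (M + 1) ^ k := mul_pow _ _ _
    _ ≤ _ := Nat.mul_le_mul_left _ hcard

end LowerBound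

lemma exists_mul_ncard_diff_translates_le {m s : ℕ} (w : Fin s → Fin m → Fin m → ℤ)
    (hli : ∀ i, LinearIndependent ℝ fun j => castVec (w i j)) (Λ : AddSubgroup (Fin m → ℤ))
    (k : Fin s → Fin m → ℕ) :
    ∃ C : ℕ, ∀ t : ℕ, (2 * t + 1) *
      ({b : Fin m → ℤ | (∀ i, |b i| ≤ (t : ℤ)) ∧ b ∈ Λ ∧ ∃ i, castVec b ∈ coneFam (w i)} \
        {b : Fin m → ℤ | (∀ i, |b i| ≤ (t : ℤ)) ∧ b ∈ Λ ∧ ∃ i, castVec b ∈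
          (fun y => y + castVec (∑ j, (k i j : ℤ) • w i j)) '' coneFam (w i)}).ncard ≤
        C * (2 * t + 1) ^ m := by
  let B i := basisOfLinearIndependentOfCardEqFinrank' _ (hli i) (by simp)
  have hB : ∀ i j, B i j = castVec (w i j) := fun i j => by simp [B]
  choose K hK using fun p : Fin s × Fin m =>
    exists_mul_ncard_slab_le (φ := (B p.1).coord p.2)
      (fun h => by simpa using LinearMap.congr_fun h (B p.1 p.2)) (k p.1 p.2)
  refine ⟨∑ p, K p, fun t => ?_⟩
  set slab := fun p : Fin s × Fin m => {b : Fin m → ℤ | (∀ i, |b i| ≤ t) ∧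
    0 ≤ (B p.1).coord p.2 (castVec b) ∧ (B p.1).coord p.2 (castVec b) < k p.1 p.2}
  calc _ ≤ (2 * t + 1) * (⋃ p, slab p).ncard := Nat.mul_le_mul_left _
        (Set.ncard_le_ncard ?_ (Set.finite_iUnion fun p => finite_setOf_abs_le_and t _))
    _ ≤ (2 * t + 1) * ∑ p, (slab p).ncard :=
        Nat.mul_le_mul_left _ (Set.ncard_iUnion_le_of_fintype _)
    _ = ∑ p, (2 * t + 1) * (slab p).ncard := mul_sum ..
    _ ≤ ∑ p, K p * (2 * t + 1) ^ m := sum_le_sum fun p _ => hK p t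
    _ = _ := (sum_mul ..).symm
  rintro b ⟨⟨hbox, hbΛ, i, hi⟩, hbN⟩
  obtain ⟨j, hj⟩ : ∃ j, (B i).coord j (castVec b) < k i j := by
    by_contra! h
    exact hbN ⟨hbox, hbΛ, i, (mem_image_add_coneFam_iff (hB i) _ _).mpr (by simpa using h)⟩
  exact Set.mem_iUnion.mpr ⟨(i, j), hbox, (mem_coneFam_iff_coord_nonneg (hB i) _).mp hi j, hj⟩

lemma tendsto_div_of_sub_le_mul {α : Type*} {l : Filter α} {N D ε : α → ℝ}
    (hε : Tendsto ε l (𝓝 0)) (hD : ∀ a, 0 < D a) (hN : ∀ a, N a ≤ D a)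
    (hsub : ∀ a, D a - N a ≤ ε a * D a) :
    Tendsto (fun a => N a / D a) l (𝓝 1) := by
  have h : Tendsto (fun a => (D a - N a) / D a) l (𝓝 0) :=
    squeeze_zero (fun a => div_nonneg (sub_nonneg.mpr (hN a)) (hD a).le)
      (fun a => (div_le_iff₀ (hD a)).mpr (hsub a)) hε
  convert h.const_sub 1 using 2 with a
  · rw [sub_div, div_self (hD a).ne', sub_sub_cancel]
  · simp

lemma tendsto_ncard_div_ncard_of_mul_ncard_diff_le {α : Type*} {m c C : ℕ} {N D : ℕ → Set α}
    (hfin : ∀ t, (D t).Finite) (hND : ∀ t, N t ⊆ D t)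
    (hD : ∀ t, (2 * t + 1) ^ m ≤ c * (D t).ncard)
    (hdiff : ∀ t, (2 * t + 1) * (D t \ N t).ncard ≤ C * (2 * t + 1) ^ m) :
    Tendsto (fun t => ((N t).ncard : ℝ) / (D t).ncard) atTop (𝓝 1) := by
  refine tendsto_div_of_sub_le_mul (ε := fun t => (C * c : ℝ) / (2 * t + 1)) ?_ (fun t => ?_)
    (fun t => by exact_mod_cast Set.ncard_le_ncard (hND t) (hfin t)) (fun t => ?_)
  · exact tendsto_const_nhds.div_atTop (tendsto_atTop_add_const_right _ 1
      (tendsto_natCast_atTop_atTop.const_mul_atTop two_pos))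
  · have := (Nat.one_le_pow m _ (by omega)).trans (hD t)
    exact_mod_cast Nat.pos_of_mul_pos_left this
  · have hcount : (2 * t + 1) * (D t \ N t).ncard ≤ C * (c * (D t).ncard) :=
      (hdiff t).trans (Nat.mul_le_mul_left C (hD t))
    rw [Set.ncard_sdiff (hND t) ((hfin t).subset (hND t))] at hcount
    have hcount' : (2 * t + 1 : ℝ) * ((D t).ncard - (N t).ncard) ≤ C * (c * (D t).ncard) := by
      rw [← Nat.cast_sub (Set.ncard_le_ncard (hND t) (hfin t))]
      exact_mod_cast hcount
    rw [div_mul_eq_mul_div, le_div_iff₀ (by positivity)]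
    linarith

theorem lattice_points_mostly_in_translated_subcones_general {m s : ℕ} (hs : 1 ≤ s)
    (w : Fin s → Fin m → (Fin m → ℤ))
    (hli : ∀ i, LinearIndependent ℝ fun j => castVec (w i j))
    (Λ : AddSubgroup (Fin m → ℤ))
    (hWΛ : ∀ i j, w i j ∈ Λ)
    (k : Fin s → Fin m → ℕ) :
    Filter.Tendsto (fun t : ℕ =>
      (Set.ncard {b : Fin m → ℤ | (∀ i, |b i| ≤ (t : ℤ)) ∧ b ∈ Λ ∧
          ∃ i : Fin s, castVec b ∈
            (fun y => y + castVec (∑ j, (k i j : ℤ) • w i j)) '' coneFam (w i)} : ℝ) /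
      (Set.ncard {b : Fin m → ℤ | (∀ i, |b i| ≤ (t : ℤ)) ∧ b ∈ Λ ∧
          ∃ i : Fin s, castVec b ∈ coneFam (w i)} : ℝ))
      Filter.atTop (nhds 1) := by
  obtain ⟨c, hc⟩ := exists_pow_le_mul_ncard_cone_points _ (hli ⟨0, hs⟩) Λ (hWΛ ⟨0, hs⟩)
  obtain ⟨C, hC⟩ := exists_mul_ncard_diff_translates_le w hli Λ k
  refine tendsto_ncard_div_ncard_of_mul_ncard_diff_le (fun t => finite_setOf_abs_le_and t _)
    (fun t => ?_) (fun t => (hc t).trans (Nat.mul_le_mul_left c ?_)) hC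
  · rintro b ⟨hbox, hbΛ, i, hi⟩
    exact ⟨hbox, hbΛ, i, image_add_coneFam_subset
      (castVec_sum_zsmul_mem_coneFam fun j => Int.natCast_nonneg _) hi⟩
  · exact Set.ncard_le_ncard (fun b ⟨hbox, hbΛ, hb⟩ => ⟨hbox, hbΛ, _, hb⟩)
      (finite_setOf_abs_le_and t _)

theorem lattice_points_mostly_in_translated_subcones {m s : ℕ} (hm : 1 ≤ m) (hs : 1 ≤ s)
    (W : Finset (Fin m → ℤ))
    (hdim : Submodule.span ℝ (castVec '' (W : Set (Fin m → ℤ))) = ⊤)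
    (w : Fin s → Fin m → (Fin m → ℤ))
    (hmem : ∀ i j, w i j ∈ W)
    (hli : ∀ i, LinearIndependent ℝ fun j => castVec (w i j))
    (hcover : coneOfSet W = ⋃ i : Fin s, coneFam (w i))
    (Λ : AddSubgroup (Fin m → ℤ))
    (hΛfull : ∃ u : Fin m → (Fin m → ℤ), (∀ i, u i ∈ Λ) ∧
      LinearIndependent ℝ fun i => castVec (u i))
    (hWΛ : ∀ i j, w i j ∈ Λ)
    (k : Fin s → Fin m → ℕ) :
    Filter.Tendsto (fun t : ℕ =>
      (Set.ncard {b : Fin m → ℤ | (∀ i, |b i| ≤ (t : ℤ)) ∧ b ∈ Λ ∧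
          ∃ i : Fin s, castVec b ∈
            (fun y => y + castVec (∑ j, (k i j : ℤ) • w i j)) '' coneFam (w i)} : ℝ) /
      (Set.ncard {b : Fin m → ℤ | (∀ i, |b i| ≤ (t : ℤ)) ∧ b ∈ Λ ∧
          ∃ i : Fin s, castVec b ∈ coneFam (w i)} : ℝ))
      Filter.atTop (nhds 1) :=
  lattice_points_mostly_in_translated_subcones_general hs w hli Λ hWΛ k
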